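/- arXiv:1601.00254 — 2 statements merged into one kernel-verified Lean document; each statement's English description precedes it below -/
import Mathlib

section
/- For a finite poset P and n ≥ 1, the strict order polynomial satisfies Ω^<(P, t) = (-1)^{|P|} · Ω^≤(P, -t), where Ω^≤(P,n) counts order-preserving maps P → [n] and Ω^<(P,n) counts strictly order-preserving maps P → [n]. -/
/-!
Look at the elements sent to the top value `n + 1`. A strict map `s → [n + 1]` sends exactly some
set `F` of maximal elements of `s` there and restricts to a strict map `s \ F → [n]`, so
`Ω^<(s, n + 1) = ∑_{F ⊆ max s} Ω^<(s \ F, n)`. Inclusion–exclusion over the maximal elements sent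
to `n + 1` gives `∑_{F ⊆ max s} (-1)^|F| Ω^≤(s \ F, n + 1) = Ω^≤(s, n)`. By induction on `s` this
second recursion makes every `Ω^≤(s, ·)` a polynomial, and read at `-n - 1` and multiplied by
`(-1)^|s|` it becomes the first recursion for `(-1)^|s| Ω^≤(s, -n)`. Both sides are `[s = ∅]` at
`n = 0`, so they agree for all `n` by induction on `n`.
-/

open Finset Polynomial

theorem Polynomial.eq_of_eval_natCast_eq {R : Type*} [CommRing R] [IsDomain R] [CharZero R]
    {p q : R[X]} (h : ∀ n : ℕ, 1 ≤ n → p.eval (n : R) = q.eval (n : R)) : p = q := by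
  refine eq_of_infinite_eval_eq p q (Set.infinite_of_injective_forall_mem
    (f := fun n : ℕ => ((n + 1 : ℕ) : R)) (fun a b hab => ?_) fun n => h _ n.succ_pos)
  exact Nat.succ_injective (Nat.cast_injective hab)

theorem Polynomial.exists_eval_natCast_eq_sum_range (p : ℚ[X]) :
    ∃ q : ℚ[X], ∀ n : ℕ, q.eval (n : ℚ) = ∑ k ∈ range n, p.eval (k : ℚ) := by
  induction p using Polynomial.induction_on' with
  | add p₁ p₂ h₁ h₂ =>
    obtain ⟨q₁, hq₁⟩ := h₁
    obtain ⟨q₂, hq₂⟩ := h₂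
    exact ⟨q₁ + q₂, fun n => by simp [hq₁, hq₂, sum_add_distrib]⟩
  | monomial i c =>
    -- Faulhaber: `(i + 1) ∑_{k < n} k ^ i = B_{i+1}(n) - B_{i+1}(0)`.
    refine ⟨C (c / (i + 1)) * (bernoulli (i + 1) - C (_root_.bernoulli (i + 1))), fun n => ?_⟩
    have := sum_range_pow_eq_bernoulli_sub n i
    simp only [eval_mul, eval_C, eval_sub, eval_monomial, ← mul_sum, ← this]
    field_simp

theorem Polynomial.exists_eval_natCast_eq_of_succ {f : ℕ → ℚ} (p : ℚ[X])
    (h : ∀ n, f (n + 1) = f n + p.eval (n : ℚ)) : ∃ q : ℚ[X], ∀ n : ℕ, q.eval (n : ℚ) = f n := by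
  obtain ⟨q, hq⟩ := exists_eval_natCast_eq_sum_range p
  refine ⟨C (f 0) + q, fun n => ?_⟩
  induction n with
  | zero => rw [eval_add, hq, sum_range_zero, eval_C, add_zero]
  | succ n ih =>
    rw [h, ← ih, eval_add, eval_add, hq, hq, sum_range_succ, eval_C, eval_C, add_assoc]

namespace OrderPolynomial

open scoped Classical

variable {P : Type*} [PartialOrder P] [Fintype P]

/-- Maps `s → [m]` satisfying `r` along every strict comparison in `s`, encoded as functions on
all of `P` that vanish off `s`. -/
noncomputable def relMaps (r : ℕ → ℕ → Prop) (s : Finset P) (m : ℕ) : Finset (P → ℕ) :=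
  {f ∈ Fintype.piFinset fun x => if x ∈ s then Icc 1 m else {0} |
    ∀ x ∈ s, ∀ y ∈ s, x < y → r (f x) (f y)}

noncomputable def maximals (s : Finset P) : Finset P := {x ∈ s | Maximal (· ∈ s) x}

variable {r : ℕ → ℕ → Prop} {s F : Finset P} {m n : ℕ} {f : P → ℕ}

theorem mem_relMaps : f ∈ relMaps r s m ↔ (∀ x ∈ s, 1 ≤ f x ∧ f x ≤ m) ∧ (∀ x ∉ s, f x = 0) ∧
    ∀ x ∈ s, ∀ y ∈ s, x < y → r (f x) (f y) := by
  simp only [relMaps, mem_filter, Fintype.mem_piFinset, ← and_assoc]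
  refine and_congr_left fun _ => ⟨fun h => ⟨fun x hx => ?_, fun x hx => ?_⟩, fun h x => ?_⟩
  · simpa [hx] using h x
  · simpa [hx] using h x
  · by_cases hx : x ∈ s <;> simp [hx, h.1 x, h.2 x]

theorem card_relMaps_zero (r : ℕ → ℕ → Prop) (s : Finset P) :
    #(relMaps r s 0) = if s = ∅ then 1 else 0 := by
  split_ifs with hs
  · subst hs
    refine card_eq_one.2 ⟨0, eq_singleton_iff_unique_mem.2 ⟨?_, fun f hf => ?_⟩⟩
    · simp [mem_relMaps]
    · exact funext fun x => (mem_relMaps.1 hf).2.1 x (notMem_empty x)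
  · obtain ⟨x, hx⟩ := nonempty_iff_ne_empty.2 hs
    exact card_eq_zero.2 (eq_empty_of_forall_notMem fun f hf => by
      have := ((mem_relMaps.1 hf).1 x hx); omega)

/-- The bijection extends a map on `s \ F` by the top value `n + 1` on `F`. -/
theorem card_relMaps_sdiff (hF : F ⊆ maximals s) (hm : m ≤ n + 1) (hr : ∀ a ≤ m, r a (n + 1)) :
    #(relMaps r (s \ F) m) =
      #{f ∈ relMaps r s (n + 1) | (∀ x ∈ F, f x = n + 1) ∧ ∀ x ∈ s \ F, f x ≤ m} := by
  have hFs : ∀ x ∈ F, x ∈ s := fun x hx => (mem_filter.1 (hF hx)).1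
  have hFmax : ∀ x ∈ F, ∀ y ∈ s, ¬ x < y := fun x hx y hy => (mem_filter.1 (hF hx)).2.not_gt hy
  refine card_nbij' (fun g x => if x ∈ F then n + 1 else g x) (fun f x => if x ∈ F then 0 else f x)
    ?_ ?_ ?_ ?_ <;>
  · intro f hf
    simp only [coe_filter, Set.mem_ofPred_eq, mem_coe, mem_relMaps, mem_sdiff] at hf ⊢
    grind

theorem card_relMaps_lt_succ (s : Finset P) (n : ℕ) :
    #(relMaps (· < ·) s (n + 1)) = ∑ F ∈ (maximals s).powerset, #(relMaps (· < ·) (s \ F) n) := by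
  have htop : ∀ f ∈ relMaps (· < ·) s (n + 1), {x ∈ s | f x = n + 1} ∈ (maximals s).powerset := by
    intro f hf
    obtain ⟨hval, -, hlt⟩ := mem_relMaps.1 hf
    refine mem_powerset.2 fun x hx => ?_
    obtain ⟨hxs, hfx⟩ := mem_filter.1 hx
    refine mem_filter.2 ⟨hxs, maximal_iff_forall_gt.2 ⟨hxs, fun y hxy hys => ?_⟩⟩
    have := hlt x hxs y hys hxy
    have := hval y hys
    omega
  rw [card_eq_sum_card_fiberwise htop]
  refine sum_congr rfl fun F hF => ?_
  have hFs : F ⊆ s := (mem_powerset.1 hF).trans (filter_subset _ _)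
  rw [card_relMaps_sdiff (mem_powerset.1 hF) n.le_succ fun a ha => Nat.lt_succ_of_le ha]
  refine congrArg card (filter_congr fun f hf => ?_)
  have hval := (mem_relMaps.1 hf).1
  simp only [Finset.ext_iff, mem_filter, mem_sdiff]
  grind

theorem filter_relMaps_succ (r : ℕ → ℕ → Prop) (s : Finset P) (n : ℕ) :
    {f ∈ relMaps r s (n + 1) | ∀ x ∈ s, f x ≠ n + 1} = relMaps r s n := by
  ext f
  simp only [mem_filter, mem_relMaps]
  constructor
  · rintro ⟨⟨hval, hout, hr⟩, htop⟩
    exact ⟨fun x hx => ⟨(hval x hx).1, by have := hval x hx; have := htop x hx; omega⟩, hout, hr⟩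
  · rintro ⟨hval, hout, hr⟩
    refine ⟨⟨fun x hx => ?_, hout, hr⟩, fun x hx => ?_⟩ <;> have := hval x hx <;> omega

theorem filter_relMaps_le_succ (s : Finset P) (n : ℕ) :
    {f ∈ relMaps (· ≤ ·) s (n + 1) | {x ∈ maximals s | f x = n + 1} = ∅} =
      relMaps (· ≤ ·) s n := by
  rw [← filter_relMaps_succ (· ≤ ·) s n]
  refine filter_congr fun f hf => ?_
  constructor
  · intro h x hx hfx
    obtain ⟨y, hxy, hy⟩ := s.exists_le_maximal hx
    obtain ⟨hval, -, hle⟩ := mem_relMaps.1 hf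
    have hfy : f y = n + 1 := by
      have := (hval y hy.1).2
      rcases hxy.lt_or_eq with hxy | rfl
      · have := hle x hx y hy.1 hxy; omega
      · exact hfx
    exact (filter_eq_empty_iff.1 h) (mem_filter.2 ⟨hy.1, hy⟩) hfy
  · intro h
    exact filter_eq_empty_iff.2 fun x hx => h x (mem_filter.1 hx).1

theorem sum_neg_one_pow_mul_card_relMaps_le_sdiff (s : Finset P) (n : ℕ) :
    ∑ F ∈ (maximals s).powerset, (-1 : ℤ) ^ #F * #(relMaps (· ≤ ·) (s \ F) (n + 1)) =
      #(relMaps (· ≤ ·) s n) := by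
  set W := relMaps (· ≤ ·) s (n + 1)
  set top : (P → ℕ) → Finset P := fun f => {x ∈ maximals s | f x = n + 1}
  calc ∑ F ∈ (maximals s).powerset, (-1 : ℤ) ^ #F * #(relMaps (· ≤ ·) (s \ F) (n + 1))
      = ∑ F ∈ (maximals s).powerset, (-1 : ℤ) ^ #F * #{f ∈ W | F ⊆ top f} := by
        refine sum_congr rfl fun F hF => ?_
        rw [card_relMaps_sdiff (mem_powerset.1 hF) le_rfl fun a ha => ha]
        congr 3
        refine filter_congr fun f hf => ?_
        have hval := (mem_relMaps.1 hf).1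
        simp only [top, subset_iff, mem_filter, mem_sdiff]
        grind
    _ = ∑ f ∈ W, ∑ F ∈ (top f).powerset, (-1 : ℤ) ^ #F := by
        simp_rw [card_filter, Nat.cast_sum, mul_sum]
        rw [sum_comm]
        refine sum_congr rfl fun f _ => ?_
        simp only [Nat.cast_ite, Nat.cast_one, Nat.cast_zero, mul_ite, mul_one, mul_zero,
          ← sum_filter]
        congr 1
        ext F
        simp only [mem_filter, mem_powerset]
        exact ⟨And.right, fun h => ⟨h.trans (filter_subset _ _), h⟩⟩
    _ = #{f ∈ W | top f = ∅} := by
        simp only [sum_powerset_neg_one_pow_card, sum_boole]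
    _ = #(relMaps (· ≤ ·) s n) := by rw [filter_relMaps_le_succ]

theorem natCard_eq_card_relMaps_univ (r : ℕ → ℕ → Prop) (hr : ∀ a b, r (a + 1) (b + 1) ↔ r a b)
    (n : ℕ) :
    Nat.card {f : P → Fin n // ∀ x y, x < y → r (f x) (f y)} =
      #(relMaps r (univ : Finset P) n) := by
  rw [← Nat.card_eq_finsetCard]
  refine Nat.card_congr
    { toFun := fun f =>
        ⟨fun x => f.1 x + 1, mem_relMaps.2 ⟨fun x _ => ?_, ?_, fun x _ y _ hxy => ?_⟩⟩
      invFun := fun g => ⟨fun x => ⟨g.1 x - 1, ?_⟩, fun x y hxy => ?_⟩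
      left_inv := fun f => ?_
      right_inv := fun g => ?_ }
  · exact ⟨Nat.le_add_left 1 _, (f.1 x).isLt⟩
  · exact fun x hx => absurd (mem_univ x) hx
  · exact (hr _ _).2 (f.2 x y hxy)
  · have := (mem_relMaps.1 g.2).1 x (mem_univ x)
    omega
  · obtain ⟨hval, -, hrel⟩ := mem_relMaps.1 g.2
    refine (hr _ _).1 ?_
    rw [Nat.sub_add_cancel (hval x (mem_univ x)).1, Nat.sub_add_cancel (hval y (mem_univ y)).1]
    exact hrel x (mem_univ x) y (mem_univ y) hxy
  · exact Subtype.ext (funext fun x => Fin.ext (Nat.add_sub_cancel _ _))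
  · exact Subtype.ext (funext fun x => Nat.sub_add_cancel ((mem_relMaps.1 g.2).1 x (mem_univ x)).1)

theorem exists_eval_eq_card_relMaps_le (s : Finset P) :
    ∃ p : ℚ[X], ∀ n : ℕ, p.eval (n : ℚ) = #(relMaps (· ≤ ·) s n) := by
  induction s using Finset.strongInduction with
  | H s ih =>
  choose! q hq using ih
  refine exists_eval_natCast_eq_of_succ
    (-∑ F ∈ (maximals s).powerset.erase ∅, C ((-1) ^ #F) * (q (s \ F)).comp (X + 1)) fun n => ?_
  have hsub : ∀ F ∈ (maximals s).powerset.erase ∅, s \ F ⊂ s := fun F hF =>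
    sdiff_ssubset ((mem_powerset.1 (mem_of_mem_erase hF)).trans (filter_subset _ _))
      (nonempty_iff_ne_empty.2 (ne_of_mem_erase hF))
  have h := congrArg (Int.cast : ℤ → ℚ) (sum_neg_one_pow_mul_card_relMaps_le_sdiff s n)
  rw [← add_sum_erase _ _ (empty_mem_powerset _)] at h
  push_cast at h
  rw [sum_congr rfl fun F hF => by rw [← hq _ (hsub F hF)]] at h
  simp only [card_empty, pow_zero, one_mul, sdiff_empty] at h
  simp only [eval_neg, eval_finsetSum, eval_mul, eval_C, eval_comp, eval_add, eval_X, eval_one]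
  push_cast at h
  linarith

noncomputable def ordPoly (s : Finset P) : ℚ[X] := (exists_eval_eq_card_relMaps_le s).choose

theorem eval_ordPoly (s : Finset P) (n : ℕ) :
    (ordPoly s).eval (n : ℚ) = #(relMaps (· ≤ ·) s n) :=
  (exists_eval_eq_card_relMaps_le s).choose_spec n

theorem eval_ordPoly_eq_sum (s : Finset P) (x : ℚ) :
    (ordPoly s).eval x =
      ∑ F ∈ (maximals s).powerset, (-1) ^ #F * (ordPoly (s \ F)).eval (x + 1) := by
  have : ordPoly s =
      ∑ F ∈ (maximals s).powerset, C ((-1) ^ #F) * (ordPoly (s \ F)).comp (X + 1) := by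
    refine eq_of_eval_natCast_eq fun n _ => ?_
    simp only [eval_finsetSum, eval_mul, eval_C, eval_comp, eval_add, eval_X, eval_one]
    have h := congrArg (Int.cast : ℤ → ℚ) (sum_neg_one_pow_mul_card_relMaps_le_sdiff s n)
    push_cast at h
    rw [eval_ordPoly, ← h]
    refine sum_congr rfl fun F _ => ?_
    rw [← Nat.cast_succ, eval_ordPoly]
  rw [this]
  simp only [eval_finsetSum, eval_mul, eval_C, eval_comp, eval_add, eval_X, eval_one]

theorem neg_one_pow_card_mul_neg_one_pow_card {R : Type*} [Monoid R] [HasDistribNeg R]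
    {α : Type*} [DecidableEq α] {s t : Finset α} (h : t ⊆ s) :
    (-1 : R) ^ #s * (-1) ^ #t = (-1) ^ #(s \ t) := by
  rw [← card_sdiff_add_card_eq_card h, pow_add, mul_assoc, ← pow_add, ← two_mul, pow_mul,
    neg_one_sq, one_pow, mul_one]

theorem card_relMaps_lt_eq_eval_ordPoly_neg (n : ℕ) (s : Finset P) :
    (#(relMaps (· < ·) s n) : ℚ) = (-1) ^ #s * (ordPoly s).eval (-n : ℚ) := by
  induction n generalizing s with
  | zero =>
    have h0 := eval_ordPoly s 0
    rw [Nat.cast_zero] at h0 ⊢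
    rw [neg_zero, h0, card_relMaps_zero, card_relMaps_zero]
    split_ifs with hs
    · simp [hs]
    · simp
  | succ n ih =>
    rw [card_relMaps_lt_succ, Nat.cast_sum, eval_ordPoly_eq_sum, mul_sum]
    refine sum_congr rfl fun F hF => ?_
    rw [ih, ← mul_assoc, neg_one_pow_card_mul_neg_one_pow_card
      ((mem_powerset.1 hF).trans (filter_subset _ _))]
    push_cast
    ring_nf

end OrderPolynomial

open OrderPolynomial in
/-- Stanley's reciprocity for order polynomials: if `Ole` is the order polynomial of a finite
poset `P` (counting order-preserving maps `P → [n]` for `n ≥ 1`) and `Olt` the strict order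
polynomial (counting strictly order-preserving maps `P → [n]` for `n ≥ 1`), then
`Ω^<(P, t) = (-1)^{|P|} · Ω^≤(P, -t)` as polynomials. -/
theorem stmt_0 (P : Type) [Fintype P] [PartialOrder P]
    (Ole Olt : Polynomial ℚ)
    (hle : ∀ n : ℕ, 1 ≤ n →
      Ole.eval (n : ℚ) = Nat.card {f : P → Fin n // ∀ x y : P, x < y → f x ≤ f y})
    (hlt : ∀ n : ℕ, 1 ≤ n →
      Olt.eval (n : ℚ) = Nat.card {f : P → Fin n // ∀ x y : P, x < y → f x < f y}) :
    Olt = (-1 : Polynomial ℚ) ^ (Fintype.card P) * Ole.comp (-Polynomial.X) := by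
  have hOle : Ole = ordPoly (Finset.univ : Finset P) := eq_of_eval_natCast_eq fun n hn => by
    rw [hle n hn, eval_ordPoly]
    exact congrArg Nat.cast
      (natCard_eq_card_relMaps_univ (· ≤ ·) (fun _ _ => Nat.add_le_add_iff_right) n)
  refine eq_of_eval_natCast_eq fun n hn => ?_
  calc Olt.eval (n : ℚ) = #(relMaps (· < ·) (Finset.univ : Finset P) n) :=
        (hlt n hn).trans (congrArg Nat.cast
          (natCard_eq_card_relMaps_univ (· < ·) (fun _ _ => Nat.add_lt_add_iff_right) n))
    _ = _ := by
        rw [card_relMaps_lt_eq_eval_ordPoly_neg, Finset.card_univ, hOle]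
        simp [eval_comp]
end

section
/- Let G be a finite oriented multigraph and A a finite abelian group of order k. Then the number of nowhere-zero A-flows on G equals φ_G(k), where φ_G is the flow polynomial, characterized by: φ_G = 1 if E = ∅; φ_G(t) = (t-1)·φ_{G\e}(t) if e is a loop; φ_G(t) = 0 if G has a coloop; φ_G(t) = φ_{G/e}(t) - φ_{G\e}(t) if e is neither a loop nor a coloop. In particular the count depends only on |A|, not on the group structure. -/
/-- A finite oriented multigraph: vertex and edge sets with head and tail maps. -/
structure Multigraph where
  V : Type
  E : Type
  finV : Finite V
  finE : Finite E
  hd : E → V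
  tl : E → V

/-- `f` is an `A`-flow on `G`: at each vertex the sum of the values on incoming edges
equals the sum on outgoing edges. -/
def Multigraph.IsFlow (G : Multigraph) {A : Type} [AddCommGroup A] (f : G.E → A) : Prop :=
  ∀ v : G.V, ∑ᶠ e ∈ {e : G.E | G.hd e = v}, f e = ∑ᶠ e ∈ {e : G.E | G.tl e = v}, f e

/-- Deletion of the edge `e₀`. -/
def Multigraph.del (G : Multigraph) (e₀ : G.E) : Multigraph where
  V := G.V
  E := {e : G.E // e ≠ e₀}
  finV := G.finV
  finE := by haveI := G.finE; infer_instance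
  hd := fun e => G.hd e.1
  tl := fun e => G.tl e.1

/-- Contraction of the edge `e₀`: the endpoints of `e₀` are identified and `e₀` removed. -/
def Multigraph.contract (G : Multigraph) (e₀ : G.E) : Multigraph where
  V := Quot (fun a b : G.V => a = G.hd e₀ ∧ b = G.tl e₀)
  E := {e : G.E // e ≠ e₀}
  finV := by haveI := G.finV; infer_instance
  finE := by haveI := G.finE; infer_instance
  hd := fun e => Quot.mk _ (G.hd e.1)
  tl := fun e => Quot.mk _ (G.tl e.1)

/-- The number of connected components `b₀(G)`. -/
noncomputable def Multigraph.b0 (G : Multigraph) : ℕ :=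
  Nat.card (Quot (fun a b : G.V =>
    ∃ e : G.E, (G.hd e = a ∧ G.tl e = b) ∨ (G.hd e = b ∧ G.tl e = a)))

/-- `e₀` is a loop. -/
def Multigraph.IsLoop (G : Multigraph) (e₀ : G.E) : Prop := G.hd e₀ = G.tl e₀

/-- `e₀` is a coloop (bridge): deleting it increases the number of components. -/
def Multigraph.IsColoop (G : Multigraph) (e₀ : G.E) : Prop :=
  (G.del e₀).b0 = G.b0 + 1

/-!
Write the conservation law as `∂f = 0`, where `∂f = ∑ₑ f(e) (δ_{hd e} - δ_{tl e})` is the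
boundary of `f` in `V →₀ A`. Deleting `e₀` changes `∂f` by `f(e₀) (δ_{hd e₀} - δ_{tl e₀})`, and
contracting `e₀` pushes `∂` forward along `V → V/(hd e₀ ~ tl e₀)`. Hence on a loop a flow takes
an arbitrary value; pushing forward onto the components of `G \ e₀` shows that a flow vanishes on
a coloop; and for any other edge restriction is a bijection from flows on `G` to flows on `G / e₀`,
so splitting by whether `f(e₀) = 0` gives `N(G / e₀) = N(G) + N(G \ e₀)` for the numbers `N` of
nowhere-zero flows. Thus `N` obeys the recursion of `φ` at `t = |A|`, and induction on the number
of edges concludes.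
-/

open Finsupp

theorem finsum_eq_add_finsum_subtype_ne {E M : Type*} [Finite E] [AddCommMonoid M]
    (F : E → M) (e₀ : E) : ∑ᶠ e, F e = F e₀ + ∑ᶠ e : {e // e ≠ e₀}, F e := by
  classical
  have := Fintype.ofFinite E
  simp only [finsum_eq_sum_of_fintype]
  exact Fintype.sum_eq_add_sum_subtype_ne F e₀

theorem forall_iff_apply_and_forall_subtype_ne {E : Type*} {P : E → Prop} (e₀ : E) :
    (∀ e, P e) ↔ P e₀ ∧ ∀ e : {e // e ≠ e₀}, P e :=
  ⟨fun h => ⟨h e₀, fun e => h e⟩,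
    fun ⟨h₀, h⟩ e => (em (e = e₀)).elim (· ▸ h₀) fun he => h ⟨e, he⟩⟩

theorem natCard_subtype_ne {α : Type*} [Fintype α] (a : α) :
    (Nat.card {x // x ≠ a} : ℤ) = Fintype.card α - 1 := by
  classical
  have : Nonempty α := ⟨a⟩
  simp [Nat.card_eq_fintype_card, Fintype.card_subtype_compl, Nat.cast_sub Fintype.card_pos]

def Equiv.subtypeFunSplitAt {E B : Type*} [DecidableEq E] (e₀ : E) (P : B → Prop)
    (Q : ({e // e ≠ e₀} → B) → Prop) :
    {f : E → B // P (f e₀) ∧ Q (fun e => f e)} ≃ {b // P b} × {g // Q g} :=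
  ((Equiv.funSplitAt e₀ B).subtypeEquiv fun _ => Iff.rfl).trans Equiv.subtypeProdEquivProd

section QuotPair

variable {V : Type*} {a b : V}

theorem Quot.eq_of_mk_eq_mk_of_ne {x y : V}
    (h : Quot.mk (fun u w => u = a ∧ w = b) x = Quot.mk _ y) (hx : x ≠ b) (hy : y ≠ b) :
    x = y := by
  classical
  let F : V → V := fun u => if u = b then a else u
  have hF : F x = F y := congrArg (Quot.lift F fun u w ⟨hu, hw⟩ => by simp [F, hu, hw]) h
  simpa [F, hx, hy] using hF

variable {A : Type*} [AddCommGroup A]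

theorem mapDomain_quot_mk_single_sub_single (x : A) :
    mapDomain (Quot.mk (fun u w => u = a ∧ w = b)) (single b x - single a x) = 0 := by
  have hab : Quot.mk (fun u w => u = a ∧ w = b) a = Quot.mk _ b := Quot.sound ⟨rfl, rfl⟩
  rw [mapDomain_sub, mapDomain_single, mapDomain_single, hab, sub_self]

theorem eq_single_sub_single_of_mapDomain_quot_mk_eq_zero (hab : a ≠ b) {d : V →₀ A}
    (hd : mapDomain (Quot.mk (fun u w => u = a ∧ w = b)) d = 0) :
    d = single b (d b) - single a (d b) := by
  set d' := d - (single b (d b) - single a (d b))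
  have hd'b : d' b = 0 := by simp [d', hab.symm]
  have hd' : mapDomain (Quot.mk fun u w => u = a ∧ w = b) d' = 0 := by
    rw [mapDomain_sub, hd, mapDomain_quot_mk_single_sub_single, sub_zero]
  suffices d' = 0 from sub_eq_zero.mp this
  -- `d'` vanishes at `b`, and the quotient map is injective away from `b`.
  ext v
  by_cases hv : v = b
  · rw [hv, hd'b, coe_zero, Pi.zero_apply]
  · rw [← mapDomain_apply' {b}ᶜ d' (by simpa using hd'b)
      (fun x hx y hy h => Quot.eq_of_mk_eq_mk_of_ne h hx hy) hv, hd']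
    rfl

end QuotPair

section EdgeBoundary

variable {E V A : Type*} [AddCommGroup A]

noncomputable def edgeBoundary (hd tl : E → V) (f : E → A) : V →₀ A :=
  ∑ᶠ e, (single (hd e) (f e) - single (tl e) (f e))

variable (hd tl : E → V) (f : E → A)

theorem edgeBoundary_eq_zero_of_forall_eq (h : ∀ e, hd e = tl e) : edgeBoundary hd tl f = 0 :=
  finsum_eq_zero_of_forall_eq_zero fun e => by rw [h, sub_self]

variable [Finite E]

theorem edgeBoundary_apply (v : V) :
    edgeBoundary hd tl f v = ∑ᶠ e ∈ {e | hd e = v}, f e - ∑ᶠ e ∈ {e | tl e = v}, f e := by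
  classical
  rw [edgeBoundary, ← applyAddHom_apply, AddMonoidHom.map_finsum _ (Set.toFinite _),
    finsum_mem_def, finsum_mem_def, ← finsum_sub_distrib (Set.toFinite _) (Set.toFinite _)]
  exact finsum_congr fun e => by simp [single_apply, Set.indicator_apply]

theorem mapDomain_edgeBoundary {W : Type*} (π : V → W) :
    mapDomain π (edgeBoundary hd tl f) = edgeBoundary (π ∘ hd) (π ∘ tl) f := by
  rw [edgeBoundary, ← mapDomain.addMonoidHom_apply, AddMonoidHom.map_finsum _ (Set.toFinite _)]
  simp [edgeBoundary, mapDomain_sub]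

theorem edgeBoundary_eq_add_edgeBoundary_subtype_ne (e₀ : E) :
    edgeBoundary hd tl f = single (hd e₀) (f e₀) - single (tl e₀) (f e₀) +
      edgeBoundary (fun e : {e // e ≠ e₀} => hd e) (fun e => tl e) (fun e => f e) :=
  finsum_eq_add_finsum_subtype_ne _ e₀

end EdgeBoundary

namespace Multigraph

instance (G : Multigraph) : Finite G.E := G.finE

-- `G.b0 = Nat.card (Quot G.Adj)` holds by `rfl`.
def Adj (G : Multigraph) (a b : G.V) : Prop :=
  ∃ e : G.E, (G.hd e = a ∧ G.tl e = b) ∨ (G.hd e = b ∧ G.tl e = a)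

theorem IsColoop.mk_hd_ne_mk_tl {G : Multigraph} {e₀ : G.E} (h : G.IsColoop e₀) :
    Quot.mk (G.del e₀).Adj (G.hd e₀) ≠ Quot.mk _ (G.tl e₀) := by
  intro hq
  have hsame : Nat.card (Quot (G.del e₀).Adj) = Nat.card (Quot G.Adj) := by
    refine Nat.card_congr ⟨Quot.lift (Quot.mk _) ?_, Quot.lift (Quot.mk _) ?_, ?_, ?_⟩
    · rintro a b ⟨e, he⟩
      exact Quot.sound ⟨e.1, he⟩
    · rintro a b ⟨e, he⟩
      by_cases hee : e = e₀
      · subst hee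
        rcases he with ⟨rfl, rfl⟩ | ⟨rfl, rfl⟩
        exacts [hq, hq.symm]
      · exact Quot.sound ⟨⟨e, hee⟩, he⟩
    · rintro ⟨x⟩; rfl
    · rintro ⟨x⟩; rfl
  have hcol : Nat.card (Quot (G.del e₀).Adj) = Nat.card (Quot G.Adj) + 1 := h
  omega

theorem card_E_del_lt (G : Multigraph) (e₀ : G.E) : Nat.card (G.del e₀).E < Nat.card G.E :=
  Finite.card_subtype_lt (p := (· ≠ e₀)) (not_not.mpr rfl)

theorem induction_on_del_contract {P : Multigraph → Prop}
    (ih : ∀ G : Multigraph, (∀ e₀ : G.E, P (G.del e₀) ∧ P (G.contract e₀)) → P G)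
    (G : Multigraph) : P G :=
  ih G fun e₀ =>
    ⟨induction_on_del_contract ih (G.del e₀), induction_on_del_contract ih (G.contract e₀)⟩
termination_by Nat.card G.E
decreasing_by exacts [G.card_E_del_lt e₀, G.card_E_del_lt e₀]

variable {A : Type} [AddCommGroup A]

theorem isFlow_iff_edgeBoundary_eq_zero (G : Multigraph) (f : G.E → A) :
    G.IsFlow f ↔ edgeBoundary G.hd G.tl f = 0 := by
  simp only [IsFlow, Finsupp.ext_iff, edgeBoundary_apply, coe_zero, Pi.zero_apply, sub_eq_zero]

theorem isFlow_del_iff (G : Multigraph) (e₀ : G.E) (g : (G.del e₀).E → A) :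
    (G.del e₀).IsFlow g ↔
      edgeBoundary (fun e : {e // e ≠ e₀} => G.hd e) (fun e => G.tl e) g = 0 :=
  isFlow_iff_edgeBoundary_eq_zero _ g

theorem isFlow_contract_iff (G : Multigraph) (e₀ : G.E) (g : {e // e ≠ e₀} → A) :
    (G.contract e₀).IsFlow g ↔
      mapDomain (Quot.mk fun a b : G.V => a = G.hd e₀ ∧ b = G.tl e₀)
        (edgeBoundary (fun e : {e // e ≠ e₀} => G.hd e) (fun e => G.tl e) g) = 0 := by
  rw [mapDomain_edgeBoundary]
  exact isFlow_iff_edgeBoundary_eq_zero (G.contract e₀) g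

theorem isFlow_iff_edgeBoundary_del (G : Multigraph) (e₀ : G.E) (f : G.E → A) :
    G.IsFlow f ↔
      edgeBoundary (fun e : {e // e ≠ e₀} => G.hd e) (fun e => G.tl e) (fun e => f e) =
        single (G.tl e₀) (f e₀) - single (G.hd e₀) (f e₀) := by
  rw [isFlow_iff_edgeBoundary_eq_zero, edgeBoundary_eq_add_edgeBoundary_subtype_ne _ _ _ e₀,
    add_eq_zero_iff_neg_eq', neg_eq_iff_eq_neg, neg_sub]

theorem isFlow_iff_isFlow_del_of_isLoop {G : Multigraph} {e₀ : G.E} (h : G.IsLoop e₀)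
    (f : G.E → A) : G.IsFlow f ↔ (G.del e₀).IsFlow (fun e => f e.1) := by
  rw [isFlow_iff_edgeBoundary_del G e₀, isFlow_del_iff, h, sub_self]
  exact Iff.rfl

theorem isFlow_iff_isFlow_del_of_apply_eq_zero (G : Multigraph) {e₀ : G.E} {f : G.E → A}
    (h : f e₀ = 0) : G.IsFlow f ↔ (G.del e₀).IsFlow (fun e => f e.1) := by
  rw [isFlow_iff_edgeBoundary_del G e₀, isFlow_del_iff, h, single_zero, single_zero, sub_zero]
  exact Iff.rfl

theorem IsFlow.apply_eq_zero_of_isColoop {G : Multigraph} {e₀ : G.E} {f : G.E → A}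
    (hf : G.IsFlow f) (h : G.IsColoop e₀) : f e₀ = 0 := by
  -- Push `∂f` forward onto the components of `G \ e₀`: every other edge becomes a loop there.
  have hcut : mapDomain (@Quot.mk G.V (G.del e₀).Adj)
      (edgeBoundary (fun e : {e // e ≠ e₀} => G.hd e) (fun e => G.tl e) (fun e => f e)) = 0 := by
    rw [mapDomain_edgeBoundary]
    exact edgeBoundary_eq_zero_of_forall_eq _ _ _ fun e => Quot.sound ⟨e, Or.inl ⟨rfl, rfl⟩⟩
  rw [(isFlow_iff_edgeBoundary_del G e₀ f).mp hf, mapDomain_sub,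
    mapDomain_single, mapDomain_single, sub_eq_zero, single_eq_single_iff] at hcut
  exact (hcut.resolve_left fun h' => h.mk_hd_ne_mk_tl h'.1.symm).1

theorem IsFlow.contract {G : Multigraph} {f : G.E → A} (hf : G.IsFlow f) (e₀ : G.E) :
    (G.contract e₀).IsFlow (fun e => f e.1) := by
  refine (isFlow_contract_iff G e₀ fun e : {e // e ≠ e₀} => f e).mpr ?_
  rw [(isFlow_iff_edgeBoundary_del G e₀ f).mp hf]
  exact mapDomain_quot_mk_single_sub_single _

theorem IsFlow.apply_eq_edgeBoundary_apply {G : Multigraph} {e₀ : G.E} (h : ¬ G.IsLoop e₀)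
    {f : G.E → A} (hf : G.IsFlow f) :
    f e₀ = edgeBoundary (fun e : {e // e ≠ e₀} => G.hd e) (fun e => G.tl e) (fun e => f e)
      (G.tl e₀) := by
  rw [(isFlow_iff_edgeBoundary_del G e₀ f).mp hf]
  simp [Ne.symm h]

theorem IsFlow.eq_of_restrict_eq {G : Multigraph} {e₀ : G.E} (h : ¬ G.IsLoop e₀)
    {f f' : G.E → A} (hf : G.IsFlow f) (hf' : G.IsFlow f')
    (hres : ∀ e : {e // e ≠ e₀}, f e = f' e) : f = f' := by
  funext e
  by_cases he : e = e₀
  · rw [he, hf.apply_eq_edgeBoundary_apply h, hf'.apply_eq_edgeBoundary_apply h, funext hres]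
  · exact hres ⟨e, he⟩

theorem exists_isFlow_of_isFlow_contract {G : Multigraph} {e₀ : G.E} (h : ¬ G.IsLoop e₀)
    {g : {e // e ≠ e₀} → A} (hg : (G.contract e₀).IsFlow g) :
    ∃ f : G.E → A, G.IsFlow f ∧ ∀ e : {e // e ≠ e₀}, f e = g e := by
  classical
  -- The value on `e₀` is forced by conservation at `tl e₀`.
  set x := edgeBoundary (fun e : {e // e ≠ e₀} => G.hd e) (fun e => G.tl e) g (G.tl e₀)
  have hx := eq_single_sub_single_of_mapDomain_quot_mk_eq_zero h
    ((isFlow_contract_iff G e₀ g).mp hg)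
  set f := (Equiv.funSplitAt e₀ A).symm (x, g)
  obtain ⟨hfx, hfg⟩ : f e₀ = x ∧ (fun e : {e // e ≠ e₀} => f e) = g :=
    Prod.mk.inj ((Equiv.funSplitAt e₀ A).apply_symm_apply (x, g))
  refine ⟨f, ?_, congrFun hfg⟩
  rw [isFlow_iff_edgeBoundary_del G e₀, hfx, hfg]
  exact hx

abbrev NowhereZeroFlow (G : Multigraph) (A : Type) [AddCommGroup A] : Type :=
  {f : G.E → A // G.IsFlow f ∧ ∀ e, f e ≠ 0}


abbrev FlowNonzeroOff (G : Multigraph) (A : Type) [AddCommGroup A] (e₀ : G.E) : Type :=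
  {f : G.E → A // G.IsFlow f ∧ ∀ e : {e // e ≠ e₀}, f e ≠ 0}

theorem card_nowhereZeroFlow_of_isEmpty (G : Multigraph) [IsEmpty G.E] :
    Nat.card (G.NowhereZeroFlow A) = 1 := by
  have : Unique (G.NowhereZeroFlow A) :=
    ⟨⟨⟨isEmptyElim, (isFlow_iff_edgeBoundary_eq_zero G _).mpr (finsum_of_isEmpty _),
      isEmptyElim⟩⟩, fun f => Subtype.ext (funext isEmptyElim)⟩
  exact Nat.card_unique

theorem card_nowhereZeroFlow_of_isColoop {G : Multigraph} {e₀ : G.E} (h : G.IsColoop e₀) :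
    Nat.card (G.NowhereZeroFlow A) = 0 :=
  have : IsEmpty (G.NowhereZeroFlow A) := ⟨fun f => f.2.2 e₀ (f.2.1.apply_eq_zero_of_isColoop h)⟩
  Nat.card_of_isEmpty

theorem card_nowhereZeroFlow_of_isLoop {G : Multigraph} {e₀ : G.E} (h : G.IsLoop e₀) :
    Nat.card (G.NowhereZeroFlow A) =
      Nat.card {a : A // a ≠ 0} * Nat.card ((G.del e₀).NowhereZeroFlow A) := by
  classical
  rw [← Nat.card_prod]
  refine Nat.card_congr ((Equiv.subtypeEquivRight fun f => ?_).trans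
    (Equiv.subtypeFunSplitAt e₀ (· ≠ 0) fun g => (G.del e₀).IsFlow g ∧ ∀ e, g e ≠ 0))
  rw [isFlow_iff_isFlow_del_of_isLoop h, forall_iff_apply_and_forall_subtype_ne e₀]
  tauto

theorem card_flowNonzeroOff_eq_card_nowhereZeroFlow_contract {G : Multigraph} {e₀ : G.E}
    (h : ¬ G.IsLoop e₀) :
    Nat.card (G.FlowNonzeroOff A e₀) = Nat.card ((G.contract e₀).NowhereZeroFlow A) := by
  refine Nat.card_congr (Equiv.ofBijective
    (fun f => ⟨fun e : {e // e ≠ e₀} => f.1 e, f.2.1.contract e₀, f.2.2⟩) ⟨?_, ?_⟩)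
  · exact fun f f' hff' => Subtype.ext
      (f.2.1.eq_of_restrict_eq h f'.2.1 (congrFun (congrArg Subtype.val hff')))
  · rintro ⟨g, hg, hg0⟩
    obtain ⟨f, hf, hfg⟩ := exists_isFlow_of_isFlow_contract h hg
    exact ⟨⟨f, hf, fun e => hfg e ▸ hg0 e⟩, Subtype.ext (funext hfg)⟩

theorem card_flowNonzeroOff [Finite A] (G : Multigraph) (e₀ : G.E) :
    Nat.card (G.FlowNonzeroOff A e₀) =
      Nat.card (G.NowhereZeroFlow A) + Nat.card ((G.del e₀).NowhereZeroFlow A) := by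
  classical
  let p (f : G.E → A) : Prop := G.IsFlow f ∧ ∀ e : {e // e ≠ e₀}, f e ≠ 0
  have nonzero : {f : G.FlowNonzeroOff A e₀ // ¬ f.1 e₀ = 0} ≃ G.NowhereZeroFlow A :=
    (Equiv.subtypeSubtypeEquivSubtypeInter p fun f => ¬ f e₀ = 0).trans
      (Equiv.subtypeEquivRight fun f => by
        rw [forall_iff_apply_and_forall_subtype_ne e₀]; tauto)
  have zero : {f : G.FlowNonzeroOff A e₀ // f.1 e₀ = 0} ≃ (G.del e₀).NowhereZeroFlow A :=
    (Equiv.subtypeSubtypeEquivSubtypeInter p fun f => f e₀ = 0).trans <|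
      (Equiv.subtypeEquivRight fun _ => and_comm.trans <| and_congr_right fun h0 =>
        and_congr_left' (isFlow_iff_isFlow_del_of_apply_eq_zero G h0)).trans <|
      (Equiv.subtypeFunSplitAt e₀ (· = 0) fun g => (G.del e₀).IsFlow g ∧ ∀ e, g e ≠ 0).trans
        (Equiv.uniqueProd _ {a : A // a = 0})
  rw [← Nat.card_congr (Equiv.sumCompl fun f : G.FlowNonzeroOff A e₀ => f.1 e₀ = 0),
    Nat.card_sum, Nat.card_congr nonzero, Nat.card_congr zero, add_comm]

theorem card_nowhereZeroFlow_contract [Finite A] {G : Multigraph} {e₀ : G.E} (h : ¬ G.IsLoop e₀) :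
    Nat.card ((G.contract e₀).NowhereZeroFlow A) =
      Nat.card (G.NowhereZeroFlow A) + Nat.card ((G.del e₀).NowhereZeroFlow A) := by
  rw [← card_flowNonzeroOff_eq_card_nowhereZeroFlow_contract h, card_flowNonzeroOff]

end Multigraph

/-- The number of nowhere-zero `A`-flows on a finite oriented multigraph `G` equals
`φ_G(|A|)`, where the flow polynomial `φ` is characterized by: `φ_G = 1` if `E = ∅`;
`φ_G = (t-1)·φ_{G\e}` if `e` is a loop; `φ_G = 0` if `G` has a coloop; and
`φ_G = φ_{G/e} - φ_{G\e}` if `e` is neither a loop nor a coloop. In particular the count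
depends only on `|A|`. -/
theorem stmt_19 (Φ : Multigraph → Polynomial ℤ)
    (h_empty : ∀ G : Multigraph, IsEmpty G.E → Φ G = 1)
    (h_loop : ∀ (G : Multigraph) (e₀ : G.E), G.IsLoop e₀ →
      Φ G = (Polynomial.X - 1) * Φ (G.del e₀))
    (h_coloop : ∀ G : Multigraph, (∃ e₀ : G.E, G.IsColoop e₀) → Φ G = 0)
    (h_delcon : ∀ (G : Multigraph) (e₀ : G.E), ¬ G.IsLoop e₀ → ¬ G.IsColoop e₀ →
      Φ G = Φ (G.contract e₀) - Φ (G.del e₀))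
    (G : Multigraph) (A : Type) [AddCommGroup A] [Fintype A] (k : ℕ)
    (hk : Fintype.card A = k) :
    (Nat.card {f : G.E → A // G.IsFlow f ∧ ∀ e : G.E, f e ≠ 0} : ℤ) =
      (Φ G).eval (k : ℤ) := by
  subst hk
  induction G using Multigraph.induction_on_del_contract with | ih G ih => ?_
  by_cases hE : IsEmpty G.E
  · rw [Multigraph.card_nowhereZeroFlow_of_isEmpty, h_empty G hE, Nat.cast_one, Polynomial.eval_one]
  obtain ⟨e₀⟩ := not_isEmpty_iff.mp hE
  by_cases hcol : ∃ e, G.IsColoop e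
  · obtain ⟨e, he⟩ := hcol
    simp [Multigraph.card_nowhereZeroFlow_of_isColoop he, h_coloop G ⟨e, he⟩]
  by_cases hloop : G.IsLoop e₀
  · rw [Multigraph.card_nowhereZeroFlow_of_isLoop hloop, h_loop G e₀ hloop, Nat.cast_mul, (ih e₀).1,
      natCard_subtype_ne, Polynomial.eval_mul, Polynomial.eval_sub, Polynomial.eval_X,
      Polynomial.eval_one]
  · rw [h_delcon G e₀ hloop fun h => hcol ⟨e₀, h⟩, Polynomial.eval_sub, ← (ih e₀).1, ← (ih e₀).2,
      Multigraph.card_nowhereZeroFlow_contract hloop]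
    push_cast
    ring
end
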